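/- arXiv:1812.08837 — 2 statements merged into one kernel-verified Lean document; each statement's English description precedes it below -/
import Mathlib

section
/- Let f : ℝ → ℝ be an arbitrary function, let M, N ≥ 1 be integers and let a ≥ 0 be an integer. Then |Σ_{x=0}^{N−1} e(f(x))| ≤ (1/M²)·Σ_{x=0}^{N−1} |Σ_{y=1}^{M} Σ_{z=1}^{M} e(f(x + a·y·z))| + 2·a·M². -/
/-!
Shifting the summation range of a sum of unimodular terms by `k` changes it by at most `2k`,
so `∑ₓ e(f(x))` equals each shifted sum `∑ₓ e(f(x + a y z))` up to an error `2 a y z ≤ 2 a M²`.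
Averaging over the `M²` pairs `(y, z)` and exchanging the order of summation gives the bound.
-/

open Finset

variable {E : Type*} [SeminormedAddCommGroup E] {g : ℕ → E}

lemma norm_sum_range_sub_sum_range_add_le (hg : ∀ n, ‖g n‖ ≤ 1) (N k : ℕ) :
    ‖∑ x ∈ range N, g x - ∑ x ∈ range N, g (x + k)‖ ≤ 2 * k := by
  -- both sides are `∑_{x < N + k} g x`, split at `N` and at `k`
  have hsplit : ∑ x ∈ range N, g x - ∑ x ∈ range N, g (x + k)
      = ∑ x ∈ range k, g x - ∑ x ∈ range k, g (N + x) := by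
    have h₁ := sum_range_add g N k
    have h₂ : ∑ x ∈ range (N + k), g x = ∑ x ∈ range k, g x + ∑ x ∈ range N, g (k + x) := by
      rw [add_comm N k, sum_range_add]
    simp only [add_comm _ k]
    rw [sub_eq_sub_iff_add_eq_add, ← h₁, h₂]
  have hbound : ∀ h : ℕ → E, (∀ n, ‖h n‖ ≤ 1) → ‖∑ x ∈ range k, h x‖ ≤ k := fun h hh => by
    simpa using norm_sum_le_of_le (range k) fun x _ => hh x
  rw [hsplit]
  calc ‖∑ x ∈ range k, g x - ∑ x ∈ range k, g (N + x)‖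
      ≤ ‖∑ x ∈ range k, g x‖ + ‖∑ x ∈ range k, g (N + x)‖ := norm_sub_le _ _
    _ ≤ k + k := add_le_add (hbound g hg) (hbound _ fun n => hg (N + n))
    _ = 2 * k := by ring

lemma card_mul_norm_sum_range_le [NormedSpace ℝ E] {ι : Type*} (hg : ∀ n, ‖g n‖ ≤ 1) (N : ℕ)
    (s : Finset ι) (k : ι → ℕ) :
    (#s : ℝ) * ‖∑ x ∈ range N, g x‖ ≤
      ∑ x ∈ range N, ‖∑ i ∈ s, g (x + k i)‖ + ∑ i ∈ s, 2 * (k i : ℝ) := by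
  set S := ∑ x ∈ range N, g x
  have hdecomp : (#s : ℝ) • S = ∑ x ∈ range N, ∑ i ∈ s, g (x + k i)
      + ∑ i ∈ s, (S - ∑ x ∈ range N, g (x + k i)) := by
    rw [sum_comm, ← sum_add_distrib, Nat.cast_smul_eq_nsmul, ← sum_const]
    simp only [add_sub_cancel]
  calc (#s : ℝ) * ‖S‖ = ‖(#s : ℝ) • S‖ := by rw [norm_smul, Real.norm_natCast]
    _ ≤ ‖∑ x ∈ range N, ∑ i ∈ s, g (x + k i)‖
          + ‖∑ i ∈ s, (S - ∑ x ∈ range N, g (x + k i))‖ := hdecomp ▸ norm_add_le _ _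
    _ ≤ _ := add_le_add (norm_sum_le _ _) <|
          norm_sum_le_of_le s fun i _ => norm_sum_range_sub_sum_range_add_le hg N (k i)

theorem single_sum_le_double_sum_general (f : ℝ → ℝ) (M N a : ℕ) (hM : 1 ≤ M) :
    ‖(∑ x ∈ Finset.range N, Complex.exp (2 * Real.pi * Complex.I * f x))‖ ≤
      (1 / (M : ℝ) ^ 2) * ∑ x ∈ Finset.range N,
          ‖(∑ y ∈ Finset.Icc 1 M, ∑ z ∈ Finset.Icc 1 M,
            Complex.exp (2 * Real.pi * Complex.I * f (x + (a : ℝ) * y * z)))‖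
        + 2 * (a : ℝ) * (M : ℝ) ^ 2 := by
  set e : ℕ → ℂ := fun n => Complex.exp (2 * Real.pi * Complex.I * f n)
  have he : ∀ n, ‖e n‖ ≤ 1 := fun n => by simp [e, Complex.norm_exp]
  set s := Icc 1 M ×ˢ Icc 1 M
  have hcard : (#s : ℝ) = (M : ℝ) ^ 2 := by simp [s, sq]
  have hmain := card_mul_norm_sum_range_le he N s fun p => a * p.1 * p.2
  have herror : ∑ p ∈ s, 2 * ((a * p.1 * p.2 : ℕ) : ℝ) ≤ #s • (2 * a * M ^ 2 : ℝ) := by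
    refine sum_le_card_nsmul _ _ _ fun p hp => ?_
    simp only [s, mem_product, mem_Icc] at hp
    have : a * p.1 * p.2 ≤ a * M * M := by gcongr <;> omega
    exact_mod_cast (by nlinarith : 2 * (a * p.1 * p.2) ≤ 2 * a * M ^ 2)
  have hdouble : ∀ x : ℕ, ∑ p ∈ s, e (x + a * p.1 * p.2) = ∑ y ∈ Icc 1 M, ∑ z ∈ Icc 1 M,
      Complex.exp (2 * Real.pi * Complex.I * f (x + (a : ℝ) * y * z)) := fun x => by
    simp [s, sum_product, e]
  simp only [hdouble, hcard] at hmain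
  rw [nsmul_eq_mul, hcard] at herror
  have hM2 : (0 : ℝ) < (M : ℝ) ^ 2 := by positivity
  rw [one_div_mul_eq_div, div_add' _ _ _ hM2.ne', le_div_iff₀ hM2]
  linarith

/-- Reduction of a single exponential sum to an average of double sums: for any `f : ℝ → ℝ`,
integers `M, N ≥ 1` and `a ≥ 0`,
`|∑_{x=0}^{N-1} e(f(x))| ≤ M⁻² ∑_{x=0}^{N-1} |∑_{y,z=1}^{M} e(f(x + a y z))| + 2 a M²`. -/
theorem single_sum_le_double_sum (f : ℝ → ℝ) (M N a : ℕ) (hM : 1 ≤ M) (hN : 1 ≤ N) :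
    ‖(∑ x ∈ Finset.range N, Complex.exp (2 * Real.pi * Complex.I * f x))‖ ≤
      (1 / (M : ℝ) ^ 2) * ∑ x ∈ Finset.range N,
          ‖(∑ y ∈ Finset.Icc 1 M, ∑ z ∈ Finset.Icc 1 M,
            Complex.exp (2 * Real.pi * Complex.I * f (x + (a : ℝ) * y * z)))‖
        + 2 * (a : ℝ) * (M : ℝ) ^ 2 :=
  single_sum_le_double_sum_general f M N a hM
end

section
/- Let t ≥ 3 be an integer, let g be an odd integer with g ≢ 1 (mod 2^t), let a be an odd integer, b an even integer and c an integer, and let τ be the multiplicative order of g modulo 2^t. Define u_n = a·(g^n − b)^{-1} + c in ℤ/2^tℤ for n ≥ 0. Then the sequence (u_n) is purely periodic with least period exactly τ: u_{n+τ} = u_n for all n ≥ 0, and if T ≥ 1 satisfies u_{n+T} = u_n for all n ≥ 0 then τ divides T. -/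
/-! The map `x ↦ a x⁻¹ + c` is injective on the units of `ℤ/2^tℤ` when `a` is odd, and every
`g^n - b` is such a unit. Hence `u_{n+T} = u_n` forces `g^T = g^0 = 1`, i.e. `τ ∣ T`; conversely
`g^τ = 1` gives `u_{n+τ} = u_n`. -/

theorem isUnit_intCast_two_pow_of_odd {x : ℤ} (hx : Odd x) (t : ℕ) :
    IsUnit (x : ZMod (2 ^ t)) :=
  (ZMod.unitOfIsCoprime x (by simpa using (Int.isCoprime_two_right.mpr hx).pow_right)).isUnit

namespace ZMod

theorem inv_inv_of_isUnit {n : ℕ} {x : ZMod n} (hx : IsUnit x) : x⁻¹⁻¹ = x :=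
  ZMod.inv_eq_of_mul_eq_one n _ _ (inv_mul_of_unit x hx)

theorem eq_of_mul_inv_add_eq {n : ℕ} {a c x y : ZMod n} (ha : IsUnit a) (hx : IsUnit x)
    (hy : IsUnit y) (h : a * x⁻¹ + c = a * y⁻¹ + c) : x = y := by
  rw [← inv_inv_of_isUnit hx, ← inv_inv_of_isUnit hy, ha.mul_left_cancel (add_right_cancel h)]

end ZMod

theorem inversive_generator_period_general (t : ℕ) (g : ℤ) (hg : Odd g)
    (a b c : ℤ) (ha : Odd a) (hb : Even b) :
    (∀ n : ℕ,
        (a : ZMod (2 ^ t)) *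
              ((g : ZMod (2 ^ t)) ^ (n + orderOf (g : ZMod (2 ^ t))) - (b : ZMod (2 ^ t)))⁻¹
            + (c : ZMod (2 ^ t)) =
          (a : ZMod (2 ^ t)) * ((g : ZMod (2 ^ t)) ^ n - (b : ZMod (2 ^ t)))⁻¹
            + (c : ZMod (2 ^ t))) ∧
      ∀ T : ℕ, 1 ≤ T →
        (∀ n : ℕ,
          (a : ZMod (2 ^ t)) * ((g : ZMod (2 ^ t)) ^ (n + T) - (b : ZMod (2 ^ t)))⁻¹
              + (c : ZMod (2 ^ t)) =
            (a : ZMod (2 ^ t)) * ((g : ZMod (2 ^ t)) ^ n - (b : ZMod (2 ^ t)))⁻¹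
              + (c : ZMod (2 ^ t))) →
        orderOf (g : ZMod (2 ^ t)) ∣ T := by
  refine ⟨fun n => by rw [pow_add, pow_orderOf_eq_one, mul_one], fun T _ hper => ?_⟩
  have hunit (n : ℕ) : IsUnit ((g : ZMod (2 ^ t)) ^ n - b) := by
    exact_mod_cast isUnit_intCast_two_pow_of_odd (hg.pow.sub_even hb) t
  have hgT := ZMod.eq_of_mul_inv_add_eq (isUnit_intCast_two_pow_of_odd ha t) (hunit T) (hunit 0)
    (by simpa only [zero_add] using hper 0)
  rw [sub_left_inj, pow_zero] at hgT
  exact orderOf_dvd_of_pow_eq_one hgT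

/-- The inversive sequence `u_n = a (g^n - b)⁻¹ + c` in `ℤ/2^tℤ` (with `a` odd, `b` even,
`g` odd, `g ≢ 1 (mod 2^t)`) is purely periodic with least period exactly `τ`, the
multiplicative order of `g` modulo `2^t`: `u_{n+τ} = u_n` for all `n`, and any period
`T ≥ 1` is a multiple of `τ`. -/
theorem inversive_generator_period (t : ℕ) (ht : 3 ≤ t) (g : ℤ) (hg : Odd g)
    (hg1 : (g : ZMod (2 ^ t)) ≠ 1) (a b c : ℤ) (ha : Odd a) (hb : Even b) :
    (∀ n : ℕ,
        (a : ZMod (2 ^ t)) *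
              ((g : ZMod (2 ^ t)) ^ (n + orderOf (g : ZMod (2 ^ t))) - (b : ZMod (2 ^ t)))⁻¹
            + (c : ZMod (2 ^ t)) =
          (a : ZMod (2 ^ t)) * ((g : ZMod (2 ^ t)) ^ n - (b : ZMod (2 ^ t)))⁻¹
            + (c : ZMod (2 ^ t))) ∧
      ∀ T : ℕ, 1 ≤ T →
        (∀ n : ℕ,
          (a : ZMod (2 ^ t)) * ((g : ZMod (2 ^ t)) ^ (n + T) - (b : ZMod (2 ^ t)))⁻¹
              + (c : ZMod (2 ^ t)) =
            (a : ZMod (2 ^ t)) * ((g : ZMod (2 ^ t)) ^ n - (b : ZMod (2 ^ t)))⁻¹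
              + (c : ZMod (2 ^ t))) →
        orderOf (g : ZMod (2 ^ t)) ∣ T :=
  inversive_generator_period_general t g hg a b c ha hb
end
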